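/- arXiv:2010.06492 — 4 statements merged into one kernel-verified Lean document; each statement's English description precedes it below -/
import Mathlib

section
/- For every integer N ≥ 2 and every M with 0 ≤ M ≤ 2, R_CIA(M) ≤ (N+1)(2-M)/N, i.e., the CIA scheme's load never exceeds the load obtained by applying the single-user cache-aided PIR scheme twice. -/
noncomputable def RCIA (N : ℕ) (M : ℝ) : ℝ :=
  if M ≤ ((N : ℝ) - 1) / (2 * N) then 2 * (1 - M)
  else if M ≤ 2 * ((N : ℝ) - 1) / (2 * N - 1) then
    ((N : ℝ) + 1) * (3 - 2 * M) / (2 * N + 1)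
  else ((N : ℝ) + 1) * (2 - M) / (2 * N)

theorem cia_beats_double_single_user (N : ℕ) (hN : 2 ≤ N) (M : ℝ)
    (hM0 : 0 ≤ M) (hM2 : M ≤ 2) :
    RCIA N M ≤ ((N : ℝ) + 1) * (2 - M) / N := by
  have hn : (2:ℝ) ≤ (N:ℝ) := by exact_mod_cast hN
  unfold RCIA
  split_ifs with h1 h2
  · rw [le_div_iff₀ (by linarith : (0:ℝ) < (N:ℝ))]
    nlinarith
  · rw [div_le_div_iff₀ (by linarith) (by linarith : (0:ℝ) < (N:ℝ))]
    nlinarith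
  · rw [div_le_div_iff₀ (by linarith) (by linarith : (0:ℝ) < (N:ℝ))]
    nlinarith [mul_nonneg (mul_nonneg (by linarith : (0:ℝ) ≤ (N:ℝ)+1) (by linarith : (0:ℝ) ≤ 2-M)) (by linarith : (0:ℝ) ≤ (N:ℝ))]
end

section
/- For all integers K ≥ 1, K_u ≥ 1, N ≥ 2 and every integer t with 0 ≤ t ≤ K_u, if R_caching ≥ (1/4)·min{(K_u - t)/(t+1), K(1 - M/K)} where M = tK/K_u, then R_PD := min{K(1 - M/K), ((K_u - t)/(t+1))(1 + 1/N + ⋯ + 1/N^{K-1})} satisfies R_PD ≤ 8 · R_caching. -/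
theorem product_design_order_optimal (K Ku N t : ℕ)
    (hK : 1 ≤ K) (hKu : 1 ≤ Ku) (hN : 2 ≤ N) (ht : t ≤ Ku)
    (M Rcaching : ℝ) (hM : M = (t : ℝ) * K / Ku)
    (hconv : Rcaching ≥ (1 / 4) *
      min (((Ku : ℝ) - t) / (t + 1)) ((K : ℝ) * (1 - M / K))) :
    min ((K : ℝ) * (1 - M / K))
        ((((Ku : ℝ) - t) / (t + 1)) * (∑ i ∈ Finset.range K, (1 / (N : ℝ)) ^ i))
      ≤ 8 * Rcaching := by
  have hKu0 : (0:ℝ) < Ku := by positivity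
  have hK0 : (0:ℝ) < K := by exact_mod_cast hK
  have htKu : (t:ℝ) ≤ Ku := by exact_mod_cast ht
  have hA : (0:ℝ) ≤ (K : ℝ) * (1 - M / K) := by
    have hMK : M ≤ K := by
      rw [hM, div_le_iff₀ hKu0]
      have : (t:ℝ) * K ≤ Ku * K := by nlinarith
      linarith
    have : M / K ≤ 1 := by
      rw [div_le_one hK0]; exact hMK
    nlinarith
  have hB : (0:ℝ) ≤ ((Ku : ℝ) - t) / (t + 1) := by
    apply div_nonneg <;> [linarith; positivity]
  have hS : (∑ i ∈ Finset.range K, (1 / (N : ℝ)) ^ i) ≤ 2 := by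
    have hN2 : (1 / (N : ℝ)) ≤ 1 / 2 := by
      apply one_div_le_one_div_of_le <;> [norm_num; exact_mod_cast hN]
    have hN0 : (0:ℝ) ≤ 1 / (N : ℝ) := by positivity
    calc (∑ i ∈ Finset.range K, (1 / (N : ℝ)) ^ i)
        ≤ ∑ i ∈ Finset.range K, (1 / 2 : ℝ) ^ i := by
          apply Finset.sum_le_sum
          intro i _
          exact pow_le_pow_left₀ hN0 hN2 i
      _ ≤ 2 := by
          have := sum_geometric_two_le K
          linarith
  have key : min ((K : ℝ) * (1 - M / K))
        ((((Ku : ℝ) - t) / (t + 1)) * (∑ i ∈ Finset.range K, (1 / (N : ℝ)) ^ i))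
      ≤ 2 * min (((Ku : ℝ) - t) / (t + 1)) ((K : ℝ) * (1 - M / K)) := by
    rcases le_total (((Ku : ℝ) - t) / (t + 1)) ((K : ℝ) * (1 - M / K)) with h | h
    · rw [min_eq_left h]
      calc min _ _ ≤ (((Ku : ℝ) - t) / (t + 1)) * (∑ i ∈ Finset.range K, (1 / (N : ℝ)) ^ i) :=
            min_le_right _ _
        _ ≤ (((Ku : ℝ) - t) / (t + 1)) * 2 := by
            exact mul_le_mul_of_nonneg_left hS hB
        _ = 2 * (((Ku : ℝ) - t) / (t + 1)) := by ring
    · rw [min_eq_right h]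
      calc min _ _ ≤ (K : ℝ) * (1 - M / K) := min_le_left _ _
        _ ≤ 2 * ((K : ℝ) * (1 - M / K)) := by linarith
  linarith
end

section
/- Over F_2 with messages A = (A₁,A₂,A₃), B = (B₁,B₂,B₃) ∈ F₂³, define Z₁ = A₁+B₁, Z₂ = A₂+B₂, and answers A_{1,1} = (A₃, B₁+B₂+B₃), A_{2,1} = (A₂+A₃, B₂+B₃), A_{1,2} = (A₁+A₂+A₃, B₃), A_{2,2} = (A₁+A₃, B₁+B₃). Then: from (A_{1,1}, A_{2,1}, Z₁) one can linearly recover (A₁,A₂,A₃); from (A_{1,1}, A_{2,1}, Z₂) one can recover (B₁,B₂,B₃); from (A_{1,2}, A_{2,2}, Z₁) one can recover (A₁,A₂,A₃); from (A_{1,1}, A_{2,2}, Z₁) one can recover (B₁,B₂,B₃); and from (A_{1,1}, A_{2,2}, Z₂) one can recover (A₁,A₂,A₃). -/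
theorem distinct_demands_corner_one_third_correct :
    (∀ A B A' B' : Fin 3 → ZMod 2,
      A 2 = A' 2 → B 0 + B 1 + B 2 = B' 0 + B' 1 + B' 2 →
      A 1 + A 2 = A' 1 + A' 2 → B 1 + B 2 = B' 1 + B' 2 →
      A 0 + B 0 = A' 0 + B' 0 → A = A') ∧
    (∀ A B A' B' : Fin 3 → ZMod 2,
      A 2 = A' 2 → B 0 + B 1 + B 2 = B' 0 + B' 1 + B' 2 →
      A 1 + A 2 = A' 1 + A' 2 → B 1 + B 2 = B' 1 + B' 2 →
      A 1 + B 1 = A' 1 + B' 1 → B = B') ∧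
    (∀ A B A' B' : Fin 3 → ZMod 2,
      A 0 + A 1 + A 2 = A' 0 + A' 1 + A' 2 → B 2 = B' 2 →
      A 0 + A 2 = A' 0 + A' 2 → B 0 + B 2 = B' 0 + B' 2 →
      A 0 + B 0 = A' 0 + B' 0 → A = A') ∧
    (∀ A B A' B' : Fin 3 → ZMod 2,
      A 2 = A' 2 → B 0 + B 1 + B 2 = B' 0 + B' 1 + B' 2 →
      A 0 + A 2 = A' 0 + A' 2 → B 0 + B 2 = B' 0 + B' 2 →
      A 0 + B 0 = A' 0 + B' 0 → B = B') ∧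
    (∀ A B A' B' : Fin 3 → ZMod 2,
      A 2 = A' 2 → B 0 + B 1 + B 2 = B' 0 + B' 1 + B' 2 →
      A 0 + A 2 = A' 0 + A' 2 → B 0 + B 2 = B' 0 + B' 2 →
      A 1 + B 1 = A' 1 + B' 1 → A = A') := by
  refine ⟨?_, ?_, ?_, ?_, ?_⟩ <;> intro A B A' B' h1 h2 h3 h4 h5
  · have e0 : A 0 = A' 0 := by linear_combination h5 - h2 + h4
    have e1 : A 1 = A' 1 := by linear_combination h3 - h1
    have e2 : A 2 = A' 2 := h1
    funext i; fin_cases i <;> assumption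
  · have e0 : B 0 = B' 0 := by linear_combination h2 - h4
    have e1 : B 1 = B' 1 := by linear_combination h5 - h3 + h1
    have e2 : B 2 = B' 2 := by linear_combination h4 - h5 + h3 - h1
    funext i; fin_cases i <;> assumption
  · have e0 : A 0 = A' 0 := by linear_combination h5 - h4 + h2
    have e1 : A 1 = A' 1 := by linear_combination h1 - h3
    have e2 : A 2 = A' 2 := by linear_combination h3 - h5 + h4 - h2
    funext i; fin_cases i <;> assumption
  · have e0 : B 0 = B' 0 := by linear_combination h5 - h3 + h1
    have e1 : B 1 = B' 1 := by linear_combination h2 - h4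
    have e2 : B 2 = B' 2 := by linear_combination h4 - h5 + h3 - h1
    funext i; fin_cases i <;> assumption
  · have e0 : A 0 = A' 0 := by linear_combination h3 - h1
    have e1 : A 1 = A' 1 := by linear_combination h5 - h2 + h4
    have e2 : A 2 = A' 2 := h1
    funext i; fin_cases i <;> assumption
end

section
/- Over F_2 with A = (A₁,A₂,A₃), B = (B₁,B₂,B₃) ∈ F₂³, define Z₁ = (A₁, B₁), Z₂ = (A₂, B₂), and answers A_{1,1} = A₃+B₃+B₁+B₂, A_{1,2} = A₃+B₃+A₁+A₂, A_{2,1} = (A₂+A₃, B₂+B₃), A_{2,2} = (A₁+A₃, B₁+B₃). Then from (A_{1,1}, A_{2,1}, Z₁) user 1 can recover A = (A₁,A₂,A₃); from (A_{1,1}, A_{2,1}, Z₂) user 2 can recover B; from (A_{1,2}, A_{2,2}, Z₁) user 1 can recover A; and from (A_{1,1}, A_{2,2}, Z₁) user 1 can recover B. -/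
private lemma rec1 : ∀ a0 a1 a2 b0 b1 b2 a0' a1' a2' b0' b1' b2' : ZMod 2,
    a2 + b2 + b0 + b1 = a2' + b2' + b0' + b1' → a1 + a2 = a1' + a2' →
    b1 + b2 = b1' + b2' → a0 = a0' → b0 = b0' →
    a0 = a0' ∧ a1 = a1' ∧ a2 = a2' := by decide

private lemma rec2 : ∀ a1 a2 b0 b1 b2 a1' a2' b0' b1' b2' : ZMod 2,
    a2 + b2 + b0 + b1 = a2' + b2' + b0' + b1' → a1 + a2 = a1' + a2' →
    b1 + b2 = b1' + b2' → a1 = a1' → b1 = b1' →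
    b0 = b0' ∧ b1 = b1' ∧ b2 = b2' := by decide

private lemma rec3 : ∀ a0 a1 a2 b0 b2 a0' a1' a2' b0' b2' : ZMod 2,
    a2 + b2 + a0 + a1 = a2' + b2' + a0' + a1' → a0 + a2 = a0' + a2' →
    b0 + b2 = b0' + b2' → a0 = a0' → b0 = b0' →
    a0 = a0' ∧ a1 = a1' ∧ a2 = a2' := by decide

private lemma rec4 : ∀ a0 a2 b0 b1 b2 a0' a2' b0' b1' b2' : ZMod 2,
    a2 + b2 + b0 + b1 = a2' + b2' + b0' + b1' → a0 + a2 = a0' + a2' →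
    b0 + b2 = b0' + b2' → a0 = a0' → b0 = b0' →
    b0 = b0' ∧ b1 = b1' ∧ b2 = b2' := by decide

theorem distinct_demands_corner_two_thirds_correct :
    (∀ A B A' B' : Fin 3 → ZMod 2,
      A 2 + B 2 + B 0 + B 1 = A' 2 + B' 2 + B' 0 + B' 1 →
      A 1 + A 2 = A' 1 + A' 2 → B 1 + B 2 = B' 1 + B' 2 →
      A 0 = A' 0 → B 0 = B' 0 → A = A') ∧
    (∀ A B A' B' : Fin 3 → ZMod 2,
      A 2 + B 2 + B 0 + B 1 = A' 2 + B' 2 + B' 0 + B' 1 →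
      A 1 + A 2 = A' 1 + A' 2 → B 1 + B 2 = B' 1 + B' 2 →
      A 1 = A' 1 → B 1 = B' 1 → B = B') ∧
    (∀ A B A' B' : Fin 3 → ZMod 2,
      A 2 + B 2 + A 0 + A 1 = A' 2 + B' 2 + A' 0 + A' 1 →
      A 0 + A 2 = A' 0 + A' 2 → B 0 + B 2 = B' 0 + B' 2 →
      A 0 = A' 0 → B 0 = B' 0 → A = A') ∧
    (∀ A B A' B' : Fin 3 → ZMod 2,
      A 2 + B 2 + B 0 + B 1 = A' 2 + B' 2 + B' 0 + B' 1 →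
      A 0 + A 2 = A' 0 + A' 2 → B 0 + B 2 = B' 0 + B' 2 →
      A 0 = A' 0 → B 0 = B' 0 → B = B') := by
  refine ⟨?_, ?_, ?_, ?_⟩ <;> intro A B A' B' h1 h2 h3 h4 h5
  · obtain ⟨e0, e1, e2⟩ := rec1 (A 0) (A 1) (A 2) (B 0) (B 1) (B 2)
      (A' 0) (A' 1) (A' 2) (B' 0) (B' 1) (B' 2) h1 h2 h3 h4 h5
    funext i; fin_cases i <;> assumption
  · obtain ⟨e0, e1, e2⟩ := rec2 (A 1) (A 2) (B 0) (B 1) (B 2)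
      (A' 1) (A' 2) (B' 0) (B' 1) (B' 2) h1 h2 h3 h4 h5
    funext i; fin_cases i <;> assumption
  · obtain ⟨e0, e1, e2⟩ := rec3 (A 0) (A 1) (A 2) (B 0) (B 2)
      (A' 0) (A' 1) (A' 2) (B' 0) (B' 2) h1 h2 h3 h4 h5
    funext i; fin_cases i <;> assumption
  · obtain ⟨e0, e1, e2⟩ := rec4 (A 0) (A 2) (B 0) (B 1) (B 2)
      (A' 0) (A' 2) (B' 0) (B' 1) (B' 2) h1 h2 h3 h4 h5
    funext i; fin_cases i <;> assumption
end
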